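/- In the additive noise outcome model Y = ε_Y + g₀(U) + A g₁(U) with affine g₀(u) = c₀ + c₁'u and g₁(u) = c₂ + c₃'u, the bias of the proxy-adjusted estimator E[Y | Z, A=1] − E[Y | Z, A=0] relative to the true CATE E[g₁(U) | Z] equals (c₁ + P(A=0 | Z) c₃)' (E[U | Z, A=1] − E[U | Z, A=0]). -/

import Mathlib

/-!
Given `Z`, conditioning on `s = {A = a}` is reweighting by `1_s / P(s | Z)`:
`E[f | Z, A = a] = E[1_s f | Z] / P(s | Z)`. Positivity of `P(s | Z)` makes `μ` absolutely
continuous with respect to `μ(· | s)` on `σ(Z)`, so `σ(Z)`-measurable identities proved under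
`μ(· | s)` hold `μ`-a.e. As `s` is `σ(U, Z, A)`-measurable, `E[ε_Y | U, Z, A] = 0` kills the
noise under each conditioning, hence `E[Y | Z, A = a] = c₀ + a c₂ + (c₁ + a c₃)'E[U | Z, A = a]`.
Total expectation gives `E[U | Z] = p E[U | Z, A = 1] + (1 - p) E[U | Z, A = 0]` with
`p = P(A = 1 | Z)`; subtracting `E[g₁(U) | Z] = c₂ + c₃'E[U | Z]` leaves the stated bias.
-/

open Matrix MeasureTheory ProbabilityTheory

namespace MeasureTheory

variable {Ω : Type*} {m : MeasurableSpace Ω} [mΩ : MeasurableSpace Ω] {μ : Measure Ω}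
  {s : Set Ω}

lemma condExp_indicator_one_nonneg : 0 ≤ᵐ[μ] μ[s.indicator (fun _ => (1 : ℝ))|m] :=
  condExp_nonneg (.of_forall (Set.indicator_nonneg fun _ _ => zero_le_one))

lemma Integrable.cond {E : Type*} [NormedAddCommGroup E] {f : Ω → E}
    (hf : Integrable f (μ.restrict s)) : Integrable f (μ[|s]) := by
  rcases eq_or_ne (μ s) 0 with hμs | hμs
  · simp [ProbabilityTheory.cond, Measure.restrict_eq_zero.mpr hμs]
  · exact hf.smul_measure (ENNReal.inv_ne_top.mpr hμs)

section FiniteMeasure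

variable [IsFiniteMeasure μ]

lemma trim_restrict_eq_trim_withDensity_condExp (hm : m ≤ mΩ) (hs : MeasurableSet s) :
    (μ.restrict s).trim hm
      = (μ.withDensity fun ω => (μ[s.indicator (fun _ => (1 : ℝ))|m] ω).toNNReal).trim hm := by
  refine @Measure.ext Ω m _ _ fun S hS => ?_
  have hind : Integrable (s.indicator fun _ => (1 : ℝ)) μ := (integrable_const 1).indicator hs
  rw [trim_measurableSet_eq hm hS, trim_measurableSet_eq hm hS, Measure.restrict_apply' hs,
    withDensity_apply _ (hm S hS)]
  calc μ (S ∩ s) = ENNReal.ofReal (∫ ω in S, s.indicator (fun _ => (1 : ℝ)) ω ∂μ) := by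
        rw [setIntegral_indicator hs, setIntegral_const, smul_eq_mul, mul_one,
          ofReal_measureReal (measure_ne_top _ _)]
    _ = ENNReal.ofReal (∫ ω in S, μ[s.indicator (fun _ => (1 : ℝ))|m] ω ∂μ) := by
        rw [setIntegral_condExp hm hind hS]
    _ = _ := ofReal_integral_eq_lintegral_ofReal integrable_condExp.integrableOn
        (ae_restrict_of_ae condExp_indicator_one_nonneg)

lemma integral_restrict_eq_integral_condExp_smul {E : Type*} [NormedAddCommGroup E]
    [NormedSpace ℝ E] (hm : m ≤ mΩ) (hs : MeasurableSet s) {h : Ω → E}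
    (hh : StronglyMeasurable[m] h) :
    ∫ ω, h ω ∂(μ.restrict s) = ∫ ω, μ[s.indicator (fun _ => (1 : ℝ))|m] ω • h ω ∂μ := by
  have hp : Measurable fun ω => (μ[s.indicator (fun _ => (1 : ℝ))|m] ω).toNNReal :=
    (stronglyMeasurable_condExp.measurable.mono hm le_rfl).real_toNNReal
  rw [integral_trim hm hh, trim_restrict_eq_trim_withDensity_condExp hm hs,
    ← integral_trim hm hh, integral_withDensity_eq_integral_smul hp]
  refine integral_congr_ae ?_
  filter_upwards [condExp_indicator_one_nonneg (m := m) (μ := μ) (s := s)] with ω hω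
  rw [NNReal.smul_def, Real.coe_toNNReal _ hω]

lemma trim_absolutelyContinuous_trim_restrict (hm : m ≤ mΩ) (hs : MeasurableSet s)
    (hp : ∀ᵐ ω ∂μ, 0 < μ[s.indicator (fun _ => (1 : ℝ))|m] ω) :
    μ.trim hm ≪ (μ.restrict s).trim hm := by
  rw [trim_restrict_eq_trim_withDensity_condExp hm hs]
  refine Measure.AbsolutelyContinuous.trim (withDensity_absolutelyContinuous' ?_ ?_) hm
  · exact (stronglyMeasurable_condExp.measurable.mono hm le_rfl).real_toNNReal
      |>.coe_nnreal_ennreal.aemeasurable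
  · filter_upwards [hp] with ω hω
    simpa using hω

lemma ae_eq_of_ae_eq_cond {E : Type*} [TopologicalSpace E] [TopologicalSpace.MetrizableSpace E]
    (hm : m ≤ mΩ) (hs : MeasurableSet s)
    (hp : ∀ᵐ ω ∂μ, 0 < μ[s.indicator (fun _ => (1 : ℝ))|m] ω) {f g : Ω → E}
    (hf : StronglyMeasurable[m] f) (hg : StronglyMeasurable[m] g) (hfg : f =ᵐ[μ[|s]] g) :
    f =ᵐ[μ] g := by
  have hfg_restrict : f =ᵐ[μ.restrict s] g :=
    (Measure.absolutelyContinuous_smul (ENNReal.inv_ne_zero.mpr (measure_ne_top μ s))).ae_eq hfg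
  exact ae_eq_of_ae_eq_trim (hm := hm) <| trim_absolutelyContinuous_trim_restrict hm hs hp
    (hf.ae_eq_trim_of_stronglyMeasurable hm hg hfg_restrict)

lemma condExp_cond_ae_eq {E : Type*} [NormedAddCommGroup E] [NormedSpace ℝ E] [CompleteSpace E]
    (hm : m ≤ mΩ) (hs : MeasurableSet s) {f : Ω → E} (hf : Integrable f μ)
    (hp : ∀ᵐ ω ∂μ, 0 < μ[s.indicator (fun _ => (1 : ℝ))|m] ω) :
    (μ[|s])[f|m]
      =ᵐ[μ] fun ω => (μ[s.indicator (fun _ => (1 : ℝ))|m] ω)⁻¹ • μ[s.indicator f|m] ω := by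
  set p := μ[s.indicator (fun _ => (1 : ℝ))|m]
  set q := μ[s.indicator f|m]
  set g : Ω → E := fun ω => (p ω)⁻¹ • q ω
  have hg : StronglyMeasurable[m] g :=
    stronglyMeasurable_condExp.measurable.inv.stronglyMeasurable.smul stronglyMeasurable_condExp
  have hpg : ∀ᵐ ω ∂μ, p ω • g ω = q ω := by
    filter_upwards [hp] with ω hω
    exact smul_inv_smul₀ hω.ne' (q ω)
  have hg_int : Integrable g (μ.restrict s) := by
    refine integrable_of_integrable_trim hm ?_
    rw [trim_restrict_eq_trim_withDensity_condExp hm hs]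
    refine Integrable.trim hm ?_ hg
    rw [integrable_withDensity_iff_integrable_smul
      (stronglyMeasurable_condExp.measurable.mono hm le_rfl).real_toNNReal]
    refine (integrable_condExp (m := m) (f := s.indicator f)).congr ?_
    filter_upwards [hpg, hp] with ω hpgω hpω
    rw [NNReal.smul_def, Real.coe_toNNReal _ hpω.le, hpgω]
  have hg_setIntegral : ∀ S, MeasurableSet[m] S →
      ∫ ω in S, g ω ∂μ.restrict s = ∫ ω in S, f ω ∂μ.restrict s := fun S hS => calc
    ∫ ω in S, g ω ∂μ.restrict s = ∫ ω, p ω • S.indicator g ω ∂μ := by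
      rw [← integral_indicator (hm S hS),
        integral_restrict_eq_integral_condExp_smul hm hs (hg.indicator hS)]
    _ = ∫ ω in S, q ω ∂μ := by
      rw [← Set.indicator_smul, integral_indicator (hm S hS)]
      exact integral_congr_ae (ae_restrict_of_ae hpg)
    _ = ∫ ω in S, f ω ∂μ.restrict s := by
      rw [setIntegral_condExp hm (hf.indicator hs) hS, setIntegral_indicator hs,
        Measure.restrict_restrict (hm S hS)]
  have hae : g =ᵐ[μ[|s]] (μ[|s])[f|m] := by
    refine ae_eq_condExp_of_forall_setIntegral_eq hm hf.restrict.cond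
      (fun S _ _ => hg_int.cond.integrableOn) (fun S hS _ => ?_) hg.aestronglyMeasurable
    simp only [ProbabilityTheory.cond, Measure.restrict_smul, integral_smul_measure,
      hg_setIntegral S hS]
  exact (ae_eq_of_ae_eq_cond hm hs hp hg stronglyMeasurable_condExp hae).symm

lemma condExp_indicator_compl_ae_eq (hm : m ≤ mΩ) (hs : MeasurableSet s) :
    μ[sᶜ.indicator (fun _ => (1 : ℝ))|m]
      =ᵐ[μ] fun ω => 1 - μ[s.indicator (fun _ => (1 : ℝ))|m] ω := by
  rw [Set.indicator_compl]
  filter_upwards [condExp_sub (integrable_const (1 : ℝ))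
    ((integrable_const (1 : ℝ)).indicator hs) m] with ω h
  rw [h, Pi.sub_apply, condExp_const hm]

lemma condExp_ae_eq_smul_cond_add_smul_cond_compl {E : Type*} [NormedAddCommGroup E]
    [NormedSpace ℝ E] [CompleteSpace E] (hm : m ≤ mΩ) (hs : MeasurableSet s) {f : Ω → E}
    (hf : Integrable f μ) (hp : ∀ᵐ ω ∂μ, 0 < μ[s.indicator (fun _ => (1 : ℝ))|m] ω)
    (hpc : ∀ᵐ ω ∂μ, 0 < μ[sᶜ.indicator (fun _ => (1 : ℝ))|m] ω) :
    μ[f|m] =ᵐ[μ] fun ω => μ[s.indicator (fun _ => (1 : ℝ))|m] ω • (μ[|s])[f|m] ω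
      + μ[sᶜ.indicator (fun _ => (1 : ℝ))|m] ω • (μ[|sᶜ])[f|m] ω := by
  have hsplit := condExp_add (hf.indicator hs) (hf.indicator hs.compl) m
  rw [Set.indicator_self_add_compl] at hsplit
  filter_upwards [hsplit, condExp_cond_ae_eq hm hs hf hp,
    condExp_cond_ae_eq hm hs.compl hf hpc, hp, hpc] with ω h h₁ h₀ hp₁ hp₀
  rw [h, h₁, h₀, smul_inv_smul₀ hp₁.ne', smul_inv_smul₀ hp₀.ne', Pi.add_apply]

end FiniteMeasure

end MeasureTheory

section AdditiveNoise

variable {Ω : Type*} {m 𝒢 : MeasurableSpace Ω} [mΩ : MeasurableSpace Ω] {μ : Measure Ω}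
  [IsFiniteMeasure μ] {ε : Ω → ℝ} {s : Set Ω}

lemma condExp_indicator_ae_eq_zero (hm𝒢 : m ≤ 𝒢) (h𝒢 : 𝒢 ≤ mΩ) (hε : Integrable ε μ)
    (hnoise : μ[ε|𝒢] =ᵐ[μ] 0) (hs : MeasurableSet[𝒢] s) : μ[s.indicator ε|m] =ᵐ[μ] 0 := by
  have hε𝒢 : μ[s.indicator ε|𝒢] =ᵐ[μ] 0 := by
    filter_upwards [condExp_indicator hε hs, hnoise] with ω h₁ h₂
    by_cases hω : ω ∈ s <;> simp [h₁, hω, h₂]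
  calc μ[s.indicator ε|m] =ᵐ[μ] μ[μ[s.indicator ε|𝒢]|m] := (condExp_condExp_of_le hm𝒢 h𝒢).symm
    _ =ᵐ[μ] μ[0|m] := condExp_congr_ae hε𝒢
    _ = 0 := condExp_zero

lemma condExp_cond_ae_eq_affine {k : ℕ} (hm𝒢 : m ≤ 𝒢) (h𝒢 : 𝒢 ≤ mΩ)
    (hs : MeasurableSet[𝒢] s) (hp : ∀ᵐ ω ∂μ, 0 < μ[s.indicator (fun _ => (1 : ℝ))|m] ω)
    (hε : Integrable ε μ) (hnoise : μ[ε|𝒢] =ᵐ[μ] 0) {U : Ω → Fin k → ℝ} (hU : Integrable U μ)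
    (a : ℝ) (b : Fin k → ℝ) {Y : Ω → ℝ} (hY : ∀ ω ∈ s, Y ω = ε ω + (b ⬝ᵥ U ω + a)) :
    (μ[|s])[Y|m] =ᵐ[μ] fun ω => b ⬝ᵥ (μ[|s])[U|m] ω + a := by
  have hm : m ≤ mΩ := hm𝒢.trans h𝒢
  have hms : MeasurableSet s := h𝒢 s hs
  set T := (dotProductBilin ℝ ℝ b).toContinuousLinearMap
  have hε_cond : (μ[|s])[ε|m] =ᵐ[μ] 0 := by
    filter_upwards [condExp_cond_ae_eq hm hms hε hp,
      condExp_indicator_ae_eq_zero hm𝒢 h𝒢 hε hnoise hs] with ω h₁ h₂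
    rw [h₁, h₂, Pi.zero_apply, smul_zero]
  have hY_cond : (μ[|s])[Y|m] =ᵐ[μ[|s]] (μ[|s])[ε|m] + fun ω => T ((μ[|s])[U|m] ω) + a :=
    (condExp_congr_ae ((ae_cond_mem hms).mono hY)).trans <|
      (condExp_add hε.restrict.cond
        ((T.integrable_comp hU.restrict.cond).add (integrable_const a)) m).trans <|
      .add .rfl (T.comp_condExp_add_const_comm hm hU.restrict.cond a).symm
  have hT : StronglyMeasurable[m] fun ω => T ((μ[|s])[U|m] ω) + a :=
    (T.continuous.comp_stronglyMeasurable stronglyMeasurable_condExp).add stronglyMeasurable_const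
  filter_upwards [ae_eq_of_ae_eq_cond hm hms hp stronglyMeasurable_condExp
    (stronglyMeasurable_condExp.add hT) hY_cond, hε_cond] with ω h₁ h₂
  rw [h₁, Pi.add_apply, h₂, Pi.zero_apply, zero_add]
  rfl

lemma condExp_cond_sub_condExp_cond_compl_sub_condExp_ae_eq {k : ℕ} (hm𝒢 : m ≤ 𝒢)
    (h𝒢 : 𝒢 ≤ mΩ) (hs : MeasurableSet[𝒢] s)
    (hp : ∀ᵐ ω ∂μ, 0 < μ[s.indicator (fun _ => (1 : ℝ))|m] ω ∧
      μ[s.indicator (fun _ => (1 : ℝ))|m] ω < 1)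
    (hnoise : μ[ε|𝒢] =ᵐ[μ] 0) {U : Ω → Fin k → ℝ} {Y : Ω → ℝ} (c₀ c₂ : ℝ) (c₁ c₃ : Fin k → ℝ)
    (hY : ∀ ω, Y ω = ε ω + (c₀ + c₁ ⬝ᵥ U ω)
      + s.indicator (fun _ => (1 : ℝ)) ω * (c₂ + c₃ ⬝ᵥ U ω))
    (hYint : Integrable Y μ) (hUint : Integrable U μ) :
    ∀ᵐ ω ∂μ, ((μ[|s])[Y|m] ω - (μ[|sᶜ])[Y|m] ω) - μ[fun ω' => c₂ + c₃ ⬝ᵥ U ω'|m] ω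
      = (c₁ + μ[sᶜ.indicator (fun _ => (1 : ℝ))|m] ω • c₃) ⬝ᵥ
        ((μ[|s])[U|m] ω - (μ[|sᶜ])[U|m] ω) := by
  have hm : m ≤ mΩ := hm𝒢.trans h𝒢
  have hms : MeasurableSet s := h𝒢 s hs
  have hp₁ : ∀ᵐ ω ∂μ, 0 < μ[s.indicator (fun _ => (1 : ℝ))|m] ω := hp.mono fun _ h => h.1
  have hp₀ : ∀ᵐ ω ∂μ, 0 < μ[sᶜ.indicator (fun _ => (1 : ℝ))|m] ω := by
    filter_upwards [hp, condExp_indicator_compl_ae_eq hm hms] with ω hω h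
    rw [h]
    linarith [hω.2]
  have hdot (c : Fin k → ℝ) : Integrable (fun ω => c ⬝ᵥ U ω) μ :=
    (dotProductBilin ℝ ℝ c).toContinuousLinearMap.integrable_comp hUint
  have hε : Integrable ε μ := by
    have hε_eq : ε = fun ω =>
        Y ω - (c₀ + c₁ ⬝ᵥ U ω) - s.indicator (fun ω => c₂ + c₃ ⬝ᵥ U ω) ω := by
      funext ω
      by_cases hω : ω ∈ s
      · simp [hY ω, hω]
        ring
      · simp [hY ω, hω]
    rw [hε_eq]
    exact (hYint.sub ((integrable_const c₀).add (hdot c₁))).sub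
      (((integrable_const c₂).add (hdot c₃)).indicator hms)
  have hY₁ := condExp_cond_ae_eq_affine hm𝒢 h𝒢 hs hp₁ hε hnoise hUint (c₀ + c₂) (c₁ + c₃)
    (Y := Y) fun ω hω => by rw [hY ω, Set.indicator_of_mem hω, add_dotProduct]; ring
  have hY₀ := condExp_cond_ae_eq_affine hm𝒢 h𝒢 hs.compl hp₀ hε hnoise hUint c₀ c₁
    (Y := Y) fun ω hω => by rw [hY ω, Set.indicator_of_notMem hω]; ring
  have hg₁ : μ[fun ω => c₂ + c₃ ⬝ᵥ U ω|m] =ᵐ[μ] fun ω => c₃ ⬝ᵥ μ[U|m] ω + c₂ := by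
    simp_rw [add_comm c₂]
    exact ((dotProductBilin ℝ ℝ c₃).toContinuousLinearMap.comp_condExp_add_const_comm
      hm hUint c₂).symm
  filter_upwards [hY₁, hY₀, hg₁,
    condExp_ae_eq_smul_cond_add_smul_cond_compl hm hms hUint hp₁ hp₀,
    condExp_indicator_compl_ae_eq hm hms] with ω hY₁ω hY₀ω hg₁ω hUω hp₀ω
  rw [hY₁ω, hY₀ω, hg₁ω, hUω, hp₀ω]
  simp only [dotProduct_add, dotProduct_sub, add_dotProduct, smul_dotProduct, dotProduct_smul,
    smul_eq_mul]
  ring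

end AdditiveNoise

theorem stmt11_general {Ω : Type*} [mΩ : MeasurableSpace Ω]
    (μ : Measure Ω) [IsProbabilityMeasure μ]
    {k p : ℕ} (U : Ω → Fin k → ℝ) (Z : Ω → Fin p → ℝ) (A : Ω → ℝ) (εY : Ω → ℝ)
    (hU : Measurable U) (hZ : Measurable Z) (hA : Measurable A)
    (c₀ c₂ : ℝ) (c₁ c₃ : Fin k → ℝ)
    -- `A` is binary with positivity `0 < P(A=1 | Z) < 1` a.s.
    (hbin : ∀ ω, A ω = 0 ∨ A ω = 1)
    (hpos : ∀ᵐ ω ∂μ,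
      0 < (μ[(fun ω' => if A ω' = 1 then (1 : ℝ) else 0) |
            MeasurableSpace.comap Z inferInstance]) ω ∧
      (μ[(fun ω' => if A ω' = 1 then (1 : ℝ) else 0) |
            MeasurableSpace.comap Z inferInstance]) ω < 1)
    -- mean-zero noise: `E[ε_Y | U, Z, A] = 0`
    (hnoise : μ[εY | MeasurableSpace.comap (fun ω => (U ω, Z ω, A ω)) inferInstance]
      =ᵐ[μ] 0)
    -- the outcome
    (Y : Ω → ℝ)
    (hY : ∀ ω, Y ω = εY ω + (c₀ + c₁ ⬝ᵥ U ω) + A ω * (c₂ + c₃ ⬝ᵥ U ω))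
    -- integrability
    (hYint : Integrable Y μ) (hUint : Integrable U μ) :
    ∀ᵐ ω ∂μ,
      (((μ[|{ω' | A ω' = 1}])[Y | MeasurableSpace.comap Z inferInstance]) ω -
        ((μ[|{ω' | A ω' = 0}])[Y | MeasurableSpace.comap Z inferInstance]) ω) -
      (μ[(fun ω' => c₂ + c₃ ⬝ᵥ U ω') | MeasurableSpace.comap Z inferInstance]) ω =
      (c₁ + (μ[(fun ω'' => if A ω'' = 0 then (1 : ℝ) else 0) |
          MeasurableSpace.comap Z inferInstance]) ω • c₃) ⬝ᵥ
        (((μ[|{ω' | A ω' = 1}])[U | MeasurableSpace.comap Z inferInstance]) ω -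
          ((μ[|{ω' | A ω' = 0}])[U | MeasurableSpace.comap Z inferInstance]) ω) := by
  set s : Set Ω := {ω | A ω = 1}
  have hs_compl : {ω | A ω = 0} = sᶜ := by
    ext ω
    rcases hbin ω with h | h <;> simp [s, h]
  have hind : ∀ a : ℝ, (fun ω => if A ω = a then (1 : ℝ) else 0)
      = {ω | A ω = a}.indicator fun _ => 1 := fun a => by
    ext ω
    simp [Set.indicator_apply]
  have hY_ind : ∀ ω, Y ω = εY ω + (c₀ + c₁ ⬝ᵥ U ω)
      + s.indicator (fun _ => (1 : ℝ)) ω * (c₂ + c₃ ⬝ᵥ U ω) := fun ω => by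
    rcases hbin ω with h | h <;> simp [hY ω, s, h]
  have hUZA : Measurable[MeasurableSpace.comap (fun ω => (U ω, Z ω, A ω)) inferInstance]
      fun ω => (U ω, Z ω, A ω) := comap_measurable _
  rw [hind 1] at hpos
  rw [hind 0, hs_compl]
  exact condExp_cond_sub_condExp_cond_compl_sub_condExp_ae_eq
    (measurable_snd.fst.comp hUZA).comap_le (hU.prodMk (hZ.prodMk hA)).comap_le
    ((measurable_snd.snd.comp hUZA) (measurableSet_singleton 1)) hpos hnoise c₀ c₂ c₁ c₃
    hY_ind hYint hUint

/-- In the additive noise model `Y = ε_Y + g₀(U) + A g₁(U)` with affine `g₀(u) = c₀ + c₁'u`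
and `g₁(u) = c₂ + c₃'u`, the bias of `E[Y | Z, A=1] − E[Y | Z, A=0]` relative to the true
CATE `E[g₁(U) | Z]` equals `(c₁ + P(A=0 | Z) c₃)' (E[U | Z, A=1] − E[U | Z, A=0])`. -/
theorem stmt11 {Ω : Type*} [mΩ : MeasurableSpace Ω]
    (μ : Measure Ω) [IsProbabilityMeasure μ]
    {k p : ℕ} (U : Ω → Fin k → ℝ) (Z : Ω → Fin p → ℝ) (A : Ω → ℝ) (εY : Ω → ℝ)
    (hU : Measurable U) (hZ : Measurable Z) (hA : Measurable A) (hεY : Measurable εY)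
    (c₀ c₂ : ℝ) (c₁ c₃ : Fin k → ℝ)
    -- `A` is binary with positivity `0 < P(A=1 | Z) < 1` a.s.
    (hbin : ∀ ω, A ω = 0 ∨ A ω = 1)
    (hpos : ∀ᵐ ω ∂μ,
      0 < (μ[(fun ω' => if A ω' = 1 then (1 : ℝ) else 0) |
            MeasurableSpace.comap Z inferInstance]) ω ∧
      (μ[(fun ω' => if A ω' = 1 then (1 : ℝ) else 0) |
            MeasurableSpace.comap Z inferInstance]) ω < 1)
    -- mean-zero noise: `E[ε_Y | U, Z, A] = 0`
    (hnoise : μ[εY | MeasurableSpace.comap (fun ω => (U ω, Z ω, A ω)) inferInstance]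
      =ᵐ[μ] 0)
    -- the outcome
    (Y : Ω → ℝ)
    (hY : ∀ ω, Y ω = εY ω + (c₀ + c₁ ⬝ᵥ U ω) + A ω * (c₂ + c₃ ⬝ᵥ U ω))
    -- integrability
    (hYint : Integrable Y μ) (hUint : Integrable U μ) :
    ∀ᵐ ω ∂μ,
      (((μ[|{ω' | A ω' = 1}])[Y | MeasurableSpace.comap Z inferInstance]) ω -
        ((μ[|{ω' | A ω' = 0}])[Y | MeasurableSpace.comap Z inferInstance]) ω) -
      (μ[(fun ω' => c₂ + c₃ ⬝ᵥ U ω') | MeasurableSpace.comap Z inferInstance]) ω =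
      (c₁ + (μ[(fun ω'' => if A ω'' = 0 then (1 : ℝ) else 0) |
          MeasurableSpace.comap Z inferInstance]) ω • c₃) ⬝ᵥ
        (((μ[|{ω' | A ω' = 1}])[U | MeasurableSpace.comap Z inferInstance]) ω -
          ((μ[|{ω' | A ω' = 0}])[U | MeasurableSpace.comap Z inferInstance]) ω) :=
  stmt11_general (mΩ := mΩ) μ U Z A εY hU hZ hA c₀ c₂ c₁ c₃ hbin hpos hnoise Y hY hYint hUint
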